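/- For every α ∈ (0,1) and t ∈ ℝ, CVaR satisfies the upper bound CVaR_{1−α}(X) ≤ t + (1/α) E[(X − t)⁺] whenever P(X > VaR_{1−α}(X)) = α, with equality at t = VaR_{1−α}(X); hence CVaR_{1−α}(X) = inf_t { t + (1/α) E[(X−t)⁺] }. -/

import Mathlib

open MeasureTheory

/-- The Value-at-Risk `VaR_{1−α}(X) = inf {t : P(X ≤ t) ≥ 1−α}`. -/
noncomputable def VaR {Ω : Type*} [MeasurableSpace Ω] (P : Measure Ω) (X : Ω → ℝ)
    (α : ℝ) : ℝ :=
  sInf {t : ℝ | 1 - α ≤ (P {ω | X ω ≤ t}).toReal}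

/-!
For any event `A` of probability `α`, `E[X; A] - t α = E[(X - t); A] ≤ E[(X - t)⁺]`, which is the
upper bound after dividing by `α`. For `A = {X > t}` the integrand `X - t` is nonnegative on `A`
and `(X - t)⁺` vanishes off `A`, so the inequality is an equality. Taking `t = VaR_{1−α}(X)`,
the hypothesis `P(X > VaR) = α` makes that `A` an admissible event, so the bound is attained and is
the infimum.
-/

noncomputable def ruObjective {Ω : Type*} [MeasurableSpace Ω] (μ : Measure Ω) (X : Ω → ℝ)
    (α t : ℝ) : ℝ :=
  t + (1 / α) * ∫ ω, max (X ω - t) 0 ∂μ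

section

variable {Ω : Type*} [MeasurableSpace Ω] {μ : Measure Ω} {X : Ω → ℝ} {s : Set Ω} {α : ℝ}

theorem setIntegral_le_integral_max_zero {g : Ω → ℝ} (hg : Integrable g μ) (s : Set Ω) :
    ∫ ω in s, g ω ∂μ ≤ ∫ ω, max (g ω) 0 ∂μ :=
  calc ∫ ω in s, g ω ∂μ ≤ ∫ ω in s, max (g ω) 0 ∂μ :=
        setIntegral_mono hg.integrableOn hg.pos_part.integrableOn fun _ => le_max_left _ _
    _ ≤ ∫ ω, max (g ω) 0 ∂μ :=
        setIntegral_le_integral hg.pos_part (Filter.Eventually.of_forall fun _ => le_max_right _ _)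

theorem integral_max_sub_zero_eq_setIntegral (hX : Integrable X μ) (t : ℝ) :
    ∫ ω, max (X ω - t) 0 ∂μ = ∫ ω in {ω | t < X ω}, (X ω - t) ∂μ := by
  have hs : NullMeasurableSet {ω | t < X ω} μ :=
    nullMeasurableSet_lt aemeasurable_const hX.aemeasurable
  calc ∫ ω, max (X ω - t) 0 ∂μ = ∫ ω in {ω | t < X ω}, max (X ω - t) 0 ∂μ :=
        (setIntegral_eq_integral_of_forall_compl_eq_zero fun ω hω =>
          max_eq_right (sub_nonpos.2 (not_lt.1 hω))).symm
    _ = ∫ ω in {ω | t < X ω}, (X ω - t) ∂μ :=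
        setIntegral_congr_fun₀ hs fun ω hω => max_eq_left (sub_nonneg.2 (le_of_lt hω))

theorem setIntegral_sub_const_of_measureReal_eq (hX : Integrable X μ) (hα : 0 < α)
    (hs : μ.real s = α) (t : ℝ) :
    ∫ ω in s, (X ω - t) ∂μ = ∫ ω in s, X ω ∂μ - t * α := by
  -- `μ.real s = 0` when `μ s = ∞`
  have hfin : μ s ≠ ⊤ := fun h => by simp [measureReal_def, h] at hs; linarith
  rw [integral_sub hX.integrableOn (integrableOn_const hfin), setIntegral_const, hs, smul_eq_mul,
    mul_comm]

theorem ruObjective_eq_setIntegral_div (hX : Integrable X μ) (hα : 0 < α) {t : ℝ}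
    (ht : μ.real {ω | t < X ω} = α) :
    ruObjective μ X α t = (∫ ω in {ω | t < X ω}, X ω ∂μ) / α := by
  rw [ruObjective, integral_max_sub_zero_eq_setIntegral hX,
    setIntegral_sub_const_of_measureReal_eq hX hα ht]
  field_simp
  ring

variable [IsFiniteMeasure μ]

theorem setIntegral_div_le_ruObjective (hX : Integrable X μ) (hα : 0 < α) (hs : μ.real s = α)
    (t : ℝ) : (∫ ω in s, X ω ∂μ) / α ≤ ruObjective μ X α t := by
  have h := setIntegral_le_integral_max_zero (g := fun ω => X ω - t)
    (hX.sub (integrable_const t)) s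
  rw [setIntegral_sub_const_of_measureReal_eq hX hα hs] at h
  rw [ruObjective, div_le_iff₀ hα]
  field_simp
  linarith

end

theorem cvar_rockafellar_uryasev_general
    {Ω : Type*} [MeasurableSpace Ω] (P : Measure Ω) [IsProbabilityMeasure P]
    (X : Ω → ℝ) (hXint : Integrable X P)
    (α : ℝ) (hα : α ∈ Set.Ioo (0 : ℝ) 1)
    (hPd : (P {ω | VaR P X α < X ω}).toReal = α) :
    (∀ t : ℝ,
        (∫ ω in {ω | VaR P X α < X ω}, X ω ∂P) / α ≤
          t + (1 / α) * ∫ ω, max (X ω - t) 0 ∂P) ∧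
      (∫ ω in {ω | VaR P X α < X ω}, X ω ∂P) / α =
        VaR P X α + (1 / α) * ∫ ω, max (X ω - VaR P X α) 0 ∂P ∧
      (∫ ω in {ω | VaR P X α < X ω}, X ω ∂P) / α =
        ⨅ t : ℝ, (t + (1 / α) * ∫ ω, max (X ω - t) 0 ∂P)  := by
  have bound := setIntegral_div_le_ruObjective hXint hα.1 hPd
  have attained := ruObjective_eq_setIntegral_div hXint hα.1 hPd
  have least : IsLeast (Set.range (ruObjective P X α))
      ((∫ ω in {ω | VaR P X α < X ω}, X ω ∂P) / α) :=
    ⟨⟨VaR P X α, attained⟩, Set.forall_mem_range.2 bound⟩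
  exact ⟨bound, attained.symm, least.isGLB.ciInf_eq.symm⟩

/-- Rockafellar–Uryasev: with `CVaR_{1−α}(X) = E[X | X > VaR_{1−α}(X)]` and
`P(X > VaR_{1−α}(X)) = α`, for every `t`, `CVaR_{1−α}(X) ≤ t + (1/α) E[(X − t)⁺]`,
with equality at `t = VaR_{1−α}(X)`; hence
`CVaR_{1−α}(X) = inf_t { t + (1/α) E[(X−t)⁺] }`. -/
theorem cvar_rockafellar_uryasev
    {Ω : Type*} [MeasurableSpace Ω] (P : Measure Ω) [IsProbabilityMeasure P]
    (X : Ω → ℝ) (hX : Measurable X) (hXint : Integrable X P)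
    (hcont : Continuous fun t : ℝ => (P {ω | X ω ≤ t}).toReal)
    (α : ℝ) (hα : α ∈ Set.Ioo (0 : ℝ) 1)
    (hPd : (P {ω | VaR P X α < X ω}).toReal = α) :
    (∀ t : ℝ,
        (∫ ω in {ω | VaR P X α < X ω}, X ω ∂P) / α ≤
          t + (1 / α) * ∫ ω, max (X ω - t) 0 ∂P) ∧
      (∫ ω in {ω | VaR P X α < X ω}, X ω ∂P) / α =
        VaR P X α + (1 / α) * ∫ ω, max (X ω - VaR P X α) 0 ∂P ∧
      (∫ ω in {ω | VaR P X α < X ω}, X ω ∂P) / α =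
        ⨅ t : ℝ, (t + (1 / α) * ∫ ω, max (X ω - t) 0 ∂P) :=
  cvar_rockafellar_uryasev_general P X hXint α hα hPd
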